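/- For all integers α ≥ 0 and j ≥ 1, the integer y_{α,j} is divisible by 3^{α+1+3(j−1)}; that is, ν₃(y_{α,j}) ≥ α + 1 + 3(j−1). -/

import Mathlib

def m : ℕ → ℕ → ℤ
  | 0, _ => 0
  | _, 0 => 0
  | 1, j => if j = 1 then 3 else 0
  | 2, j => if j = 1 then 2 else if j = 2 then 27 else 0
  | 3, j => if j = 1 then 1 else if j = 2 then 27 else if j = 3 then 243 else 0
  | i + 4, j + 1 =>
    if i + 4 < j + 1 then 0
    else 9 * m (i + 3) j + 3 * m (i + 2) j + m (i + 1) j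

def c (i j : ℕ) : ℤ := m (4 * i) (i + j)

def y : ℕ → ℕ → ℤ
  | 0, i => if i = 1 then 3 else 0
  | α + 1, j => ∑ i ∈ Finset.Icc 1 (3 ^ α), y α i * c i j

/-!
Since the coefficients `9, 3, 1` of the recurrence for `m` are `3², 3¹, 3⁰`, the quantity
`3^(n+1) m_{n,k}` gains a factor `27` each time `k` increases, so `3^(3k) ∣ 3^(n+1) m_{n,k}`.
For `c_{i,j} = m_{4i,i+j}` this says `3^(3j) ∣ 3^(i+1) c_{i,j}`, and the loss of `i + 1` factors
of 3 in `c_{i,j}` is more than made up by the `3(i-1)` extra factors in `y_{α,i}`, which gives the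
induction step on `α`.
-/

theorem pow_dvd_of_pow_add_dvd_pow_mul {M : Type*} [MonoidWithZero M] [IsLeftCancelMulZero M]
    {p x : M} (hp : p ≠ 0) {a b : ℕ} (h : p ^ (a + b) ∣ p ^ a * x) : p ^ b ∣ x := by
  rwa [pow_add, mul_dvd_mul_iff_left (pow_ne_zero a hp)] at h

theorem m_add_four_succ (n k : ℕ) (hk : k ≤ n + 3) :
    m (n + 4) (k + 1) = 9 * m (n + 3) k + 3 * m (n + 2) k + m (n + 1) k := by
  rw [m, if_neg (by omega)]

theorem m_of_lt (n k : ℕ) (hk : n < k) : m n k = 0 := by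
  rcases n with _ | _ | _ | _ | n <;> rcases k with _ | k <;> simp [m] <;> omega

theorem three_pow_dvd_m (n k : ℕ) : (3 : ℤ) ^ (3 * k) ∣ 3 ^ (n + 1) * m n k := by
  induction n using Nat.strong_induction_on generalizing k with
  | _ n ih =>
    match n, k with
    | 0, k | 1, k | 2, k | 3, k =>
      rcases k with _ | _ | _ | _ | k <;> simp [m]
    | n + 4, 0 => simp
    | n + 4, k + 1 =>
      by_cases hk : n + 4 < k + 1
      · simp [m_of_lt _ _ hk]
      rw [m_add_four_succ n k (by omega)]
      have expand : (3 : ℤ) ^ (n + 4 + 1) * (9 * m (n + 3) k + 3 * m (n + 2) k + m (n + 1) k)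
          = 3 ^ 3 * (3 ^ (n + 3 + 1) * m (n + 3) k + 3 ^ (n + 2 + 1) * m (n + 2) k
            + 3 ^ (n + 1 + 1) * m (n + 1) k) := by ring
      rw [expand, mul_add, mul_one, pow_add, mul_comm]
      exact mul_dvd_mul_left _ <| dvd_add
        (dvd_add (ih (n + 3) (by omega) k) (ih (n + 2) (by omega) k)) (ih (n + 1) (by omega) k)

theorem three_pow_dvd_c (i j : ℕ) : (3 : ℤ) ^ (3 * j) ∣ 3 ^ (i + 1) * c i j := by
  refine pow_dvd_of_pow_add_dvd_pow_mul (a := 3 * i) three_ne_zero ?_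
  rw [← mul_add, ← mul_assoc, ← pow_add, show 3 * i + (i + 1) = 4 * i + 1 by ring]
  exact three_pow_dvd_m (4 * i) (i + j)

theorem three_pow_dvd_y (α j : ℕ) : (3 : ℤ) ^ (α + 1 + 3 * j) ∣ y α (j + 1) := by
  induction α generalizing j with
  | zero => rcases j with _ | j <;> simp [y]
  | succ α ih =>
    refine Finset.dvd_sum fun i hi => ?_
    obtain ⟨i, rfl⟩ : ∃ i', i = i' + 1 := ⟨i - 1, by grind⟩
    have hprod := mul_dvd_mul (ih i) (three_pow_dvd_c (i + 1) (j + 1))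
    rw [mul_left_comm, ← pow_add,
      show α + 1 + 3 * i + 3 * (j + 1) = (i + 1 + 1) + (α + 2 * i + 3 * j + 2) by ring] at hprod
    exact (pow_dvd_pow 3 (by omega)).trans (pow_dvd_of_pow_add_dvd_pow_mul three_ne_zero hprod)

theorem y_valuation (α j : ℕ) (hj : 1 ≤ j) :
    (3 : ℤ) ^ (α + 1 + 3 * (j - 1)) ∣ y α j := by
  obtain ⟨j, rfl⟩ : ∃ j', j = j' + 1 := ⟨j - 1, by omega⟩
  simpa using three_pow_dvd_y α j
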